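/- arXiv:2010.07672 — 3 statements merged into one kernel-verified Lean document; each statement's English description precedes it below -/
import Mathlib

section
/- For any vector field s = (s₁, s₂) ∈ C²(ω, ℝ²) on an open set ω ⊂ ℝ², one has the pointwise identity: 4 det(sym ∇s) + (1/2) curl^T curl(s ⊗ s) = 3 det(∇s) − ⟨∇(curl s), s^⊥⟩, where s^⊥ = (−s₂, s₁). -/
open MeasureTheory Filter Matrix

attribute [local instance] Matrix.frobeniusNormedAddCommGroup Matrix.frobeniusNormedSpace

noncomputable section

abbrev R2 := ℝ × ℝ
abbrev M2 := Matrix (Fin 2) (Fin 2) ℝ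

/-- classical partial derivative in coordinate direction `i`. -/
def pd (i : Fin 2) (f : R2 → ℝ) (x : R2) : ℝ :=
  fderiv ℝ f x (if i = 0 then ((1:ℝ), (0:ℝ)) else ((0:ℝ), (1:ℝ)))

/-- smooth test function compactly supported in ω. -/
def IsTest (ω : Set R2) (α : R2 → ℝ) : Prop :=
  ContDiff ℝ (⊤ : ℕ∞) α ∧ HasCompactSupport α ∧ tsupport α ⊆ ω

def μr (ω : Set R2) : Measure R2 := volume.restrict ω

def MemL2 {E : Type*} [NormedAddCommGroup E] (ω : Set R2) (f : R2 → E) : Prop :=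
  MemLp f 2 (μr ω)

def l2norm {E : Type*} [NormedAddCommGroup E] (ω : Set R2) (f : R2 → E) : ℝ :=
  (eLpNorm f 2 (μr ω)).toReal

def HasWeakPD (ω : Set R2) (i : Fin 2) (f g : R2 → ℝ) : Prop :=
  ∀ α : R2 → ℝ, IsTest ω α →
    ∫ x in ω, f x * pd i α x = - ∫ x in ω, g x * α x

def sym2 (M : M2) : M2 := (2⁻¹ : ℝ) • (M + Mᵀ)

def cof2 (M : M2) : M2 := !![M 1 1, -(M 0 1); -(M 1 0), M 0 0]

def frob (A B : M2) : ℝ := ∑ i, ∑ j, A i j * B i j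

def gradC (f : R2 → ℝ) (x : R2) : R2 := (pd 0 f x, pd 1 f x)

def hessC (f : R2 → ℝ) (x : R2) : M2 :=
  !![pd 0 (pd 0 f) x, pd 0 (pd 1 f) x; pd 1 (pd 0 f) x, pd 1 (pd 1 f) x]

def jacC (ψ : R2 → R2) (x : R2) : M2 :=
  !![pd 0 (fun y => (ψ y).1) x, pd 1 (fun y => (ψ y).1) x;
     pd 0 (fun y => (ψ y).2) x, pd 1 (fun y => (ψ y).2) x]

def MemW12 (ω : Set R2) (f : R2 → ℝ) (g : R2 → R2) : Prop :=
  MemL2 ω f ∧ MemL2 ω g ∧ HasWeakPD ω 0 f (fun x => (g x).1) ∧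
    HasWeakPD ω 1 f (fun x => (g x).2)

/-- vector-valued `W^{1,2}` field `w` with weak Jacobian `G` (rows = gradients). -/
def MemW12v (ω : Set R2) (w : R2 → R2) (G : R2 → M2) : Prop :=
  MemL2 ω w ∧ MemL2 ω G ∧
    HasWeakPD ω 0 (fun x => (w x).1) (fun x => G x 0 0) ∧
    HasWeakPD ω 1 (fun x => (w x).1) (fun x => G x 0 1) ∧
    HasWeakPD ω 0 (fun x => (w x).2) (fun x => G x 1 0) ∧
    HasWeakPD ω 1 (fun x => (w x).2) (fun x => G x 1 1)

def HasWeakHess (ω : Set R2) (f : R2 → ℝ) (H : R2 → M2) : Prop :=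
  ∀ α : R2 → ℝ, IsTest ω α → ∀ i j : Fin 2,
    ∫ x in ω, f x * pd i (pd j α) x = ∫ x in ω, H x i j * α x

def MemW22 (ω : Set R2) (f : R2 → ℝ) (g : R2 → R2) (H : R2 → M2) : Prop :=
  MemW12 ω f g ∧ MemL2 ω H ∧ HasWeakHess ω f H

/-- `φ ∈ W^{1,2}_0(ω,ℝ²)`: member of `W^{1,2}` approximable by smooth compactly
supported fields in the `W^{1,2}` norm. -/
def MemW12_0v (ω : Set R2) (φ : R2 → R2) (G : R2 → M2) : Prop :=
  MemW12v ω φ G ∧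
  ∃ ψ : ℕ → R2 → R2,
    (∀ n, ContDiff ℝ (⊤ : ℕ∞) (ψ n) ∧ HasCompactSupport (ψ n) ∧ tsupport (ψ n) ⊆ ω) ∧
    Tendsto (fun n => l2norm ω (fun x => φ x - ψ n x)
        + l2norm ω (fun x => G x - jacC (ψ n) x)) atTop (nhds 0)

/-- `r ∈ W^{2,2}_0(ω)`: member of `W^{2,2}` approximable by test functions in `W^{2,2}`. -/
def MemW22_0 (ω : Set R2) (r : R2 → ℝ) (g : R2 → R2) (H : R2 → M2) : Prop :=
  MemW22 ω r g H ∧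
  ∃ ψ : ℕ → R2 → ℝ, (∀ n, IsTest ω (ψ n)) ∧
    Tendsto (fun n => l2norm ω (fun x => r x - ψ n x)
      + l2norm ω (fun x => g x - gradC (ψ n) x)
      + l2norm ω (fun x => H x - hessC (ψ n) x)) atTop (nhds 0)

def gradNormSq (ω : Set R2) (α : R2 → ℝ) : ℝ := ∫ x in ω, ((pd 0 α x)^2 + (pd 1 α x)^2)

def hessNormSq (ω : Set R2) (α : R2 → ℝ) : ℝ := ∫ x in ω, frob (hessC α x) (hessC α x)

/-- `H^{-1}(ω)` norm of the (distributional) row-wise curl of a matrix field. -/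
def curlHneg1 (ω : Set R2) (F : R2 → M2) : ℝ :=
  sSup { r | ∃ α : Fin 2 → R2 → ℝ, (∀ i, IsTest ω (α i)) ∧
    (∑ i, gradNormSq ω (α i)) ≤ 1 ∧
    r = ∑ i, ∫ x in ω, (F x i 0 * pd 1 (α i) x - F x i 1 * pd 0 (α i) x) }

/-- `H^{-2}(ω)` norm of the distribution `curlᵀ curl F`. -/
def ctcHneg2 (ω : Set R2) (F : R2 → M2) : ℝ :=
  sSup { r | ∃ α : R2 → ℝ, IsTest ω α ∧ hessNormSq ω α ≤ 1 ∧
    r = ∫ x in ω, frob (F x) (cof2 (hessC α x)) }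

/-- `H^{-2}(ω)` norm of a locally integrable function. -/
def funcHneg2 (ω : Set R2) (f : R2 → ℝ) : ℝ :=
  sSup { r | ∃ α : R2 → ℝ, IsTest ω α ∧ hessNormSq ω α ≤ 1 ∧
    r = ∫ x in ω, f x * α x }

/-- `H^{-2}(ω)` norm of `det H + curlᵀ curl S`. -/
def detPlusCtcHneg2 (ω : Set R2) (H S : R2 → M2) : ℝ :=
  sSup { r | ∃ α : R2 → ℝ, IsTest ω α ∧ hessNormSq ω α ≤ 1 ∧
    r = (∫ x in ω, (H x).det * α x) + ∫ x in ω, frob (S x) (cof2 (hessC α x)) }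

def linftyNorm (ω : Set R2) (F : R2 → M2) : ℝ := (eLpNorm F ⊤ (μr ω)).toReal

def HasLipschitzBoundary (ω : Set R2) : Prop :=
  ∀ x ∈ frontier ω, ∃ r > (0:ℝ), ∃ A : R2 ≃ᵃⁱ[ℝ] R2, ∃ f : ℝ → ℝ, ∃ K,
    LipschitzWith K f ∧
    ω ∩ Metric.ball x r = (A '' {p : R2 | p.2 < f p.1}) ∩ Metric.ball x r

def NiceDomain (ω : Set R2) : Prop :=
  IsOpen ω ∧ Bornology.IsBounded ω ∧ SimplyConnectedSpace ω ∧ HasLipschitzBoundary ω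

def distToHess (ω : Set R2) (F : R2 → M2) : ℝ :=
  sInf { t | ∃ v g H, MemW22 ω v g H ∧ t = l2norm ω (fun x => F x - H x) }

def distToGrad (ω : Set R2) (F : R2 → M2) : ℝ :=
  sInf { t | ∃ w G, MemW12v ω w G ∧ t = l2norm ω (fun x => F x - G x) }

def distToSymGrad (ω : Set R2) (F : R2 → M2) : ℝ :=
  sInf { t | ∃ w G, MemW12v ω w G ∧ t = l2norm ω (fun x => F x - sym2 (G x)) }


def curlC (s : R2 → R2) (x : R2) : ℝ :=
  pd 0 (fun y => (s y).2) x - pd 1 (fun y => (s y).1) x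

lemma pd_diff {f : R2 → ℝ} {x : R2} (hf : ContDiffAt ℝ 2 f x) (j : Fin 2) :
    DifferentiableAt ℝ (pd j f) x := by
  unfold pd
  have h := hf.fderiv_right (m := 1) (by norm_num)
  exact (h.differentiableAt (by norm_num)).clm_apply (differentiableAt_const _)

lemma pd_mul {f g : R2 → ℝ} {x : R2} (hf : DifferentiableAt ℝ f x)
    (hg : DifferentiableAt ℝ g x) (i : Fin 2) :
    pd i (fun y => f y * g y) x = f x * pd i g x + g x * pd i f x := by
  unfold pd
  rw [fderiv_fun_mul hf hg]
  simp

lemma pd_add {f g : R2 → ℝ} {x : R2} (hf : DifferentiableAt ℝ f x)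
    (hg : DifferentiableAt ℝ g x) (i : Fin 2) :
    pd i (fun y => f y + g y) x = pd i f x + pd i g x := by
  unfold pd
  rw [fderiv_fun_add hf hg]
  simp

lemma pd_sub {f g : R2 → ℝ} {x : R2} (hf : DifferentiableAt ℝ f x)
    (hg : DifferentiableAt ℝ g x) (i : Fin 2) :
    pd i (fun y => f y - g y) x = pd i f x - pd i g x := by
  unfold pd
  rw [fderiv_fun_sub hf hg]
  simp

lemma pd_comm {f : R2 → ℝ} {x : R2} (hf : ContDiffAt ℝ 2 f x) :
    pd 0 (pd 1 f) x = pd 1 (pd 0 f) x := by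
  have hsymm : IsSymmSndFDerivAt ℝ f x := hf.isSymmSndFDerivAt (by simp)
  have hd : DifferentiableAt ℝ (fderiv ℝ f) x :=
    (hf.fderiv_right (m := 1) (by norm_num)).differentiableAt (by norm_num)
  have key : ∀ v w : R2, fderiv ℝ (fun y => fderiv ℝ f y w) x v
      = fderiv ℝ (fderiv ℝ f) x v w := by
    intro v w
    rw [fderiv_clm_apply hd (differentiableAt_const w)]
    simp
  unfold pd
  simp only [show ((0:Fin 2) = 0) = True by simp, show ((1:Fin 2) = 0) = False by simp,
    if_true, if_false]
  rw [key, key, hsymm]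

lemma pd_pd_mul {f g : R2 → ℝ} {x : R2} (hf : ContDiffAt ℝ 2 f x)
    (hg : ContDiffAt ℝ 2 g x) (i j : Fin 2) :
    pd i (pd j (fun y => f y * g y)) x
      = pd i f x * pd j g x + pd j f x * pd i g x
        + f x * pd i (pd j g) x + g x * pd i (pd j f) x := by
  have hev : (pd j (fun y => f y * g y)) =ᶠ[nhds x]
      (fun y => f y * pd j g y + g y * pd j f y) := by
    filter_upwards [hf.eventually (by simp), hg.eventually (by simp)] with y hfy hgy
    exact pd_mul (hfy.differentiableAt (by norm_num)) (hgy.differentiableAt (by norm_num)) j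
  have : pd i (pd j (fun y => f y * g y)) x
      = pd i (fun y => f y * pd j g y + g y * pd j f y) x := by
    have h2 := hev.fderiv_eq (𝕜 := ℝ)
    unfold pd at h2 ⊢
    rw [h2]
  rw [this]
  have hfd := hf.differentiableAt (by norm_num)
  have hgd := hg.differentiableAt (by norm_num)
  rw [pd_add (f := fun y => f y * pd j g y) (g := fun y => g y * pd j f y) (hfd.mul (pd_diff hg j)) (hgd.mul (pd_diff hf j)),
    pd_mul hfd (pd_diff hg j), pd_mul hgd (pd_diff hf j)]
  ring


/-- Pointwise identity: `4 det(sym ∇s) + ½ curlᵀcurl(s⊗s) = 3 det ∇s − ⟨∇(curl s), s^⊥⟩`. -/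
theorem stmt_6 (ω : Set R2) (hω : IsOpen ω) (s : R2 → R2) (hs : ContDiffOn ℝ 2 s ω) :
    ∀ x ∈ ω,
      4 * (sym2 (jacC s x)).det
        + (1/2) * (pd 0 (pd 0 (fun y => (s y).2 * (s y).2)) x
            - 2 * pd 0 (pd 1 (fun y => (s y).1 * (s y).2)) x
            + pd 1 (pd 1 (fun y => (s y).1 * (s y).1)) x)
      = 3 * (jacC s x).det
        - (pd 0 (curlC s) x * (-(s x).2) + pd 1 (curlC s) x * (s x).1) := by
  intro x hx
  have hsx : ContDiffAt ℝ 2 s x := hs.contDiffAt (hω.mem_nhds hx)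
  have ha : ContDiffAt ℝ 2 (fun y => (s y).1) x := (contDiff_fst.contDiffAt).comp x hsx
  have hb : ContDiffAt ℝ 2 (fun y => (s y).2) x := (contDiff_snd.contDiffAt).comp x hsx
  have had := ha.differentiableAt (by norm_num)
  have hbd := hb.differentiableAt (by norm_num)
  have hcurl : ∀ i : Fin 2, pd i (curlC s) x
      = pd i (pd 0 (fun y => (s y).2)) x - pd i (pd 1 (fun y => (s y).1)) x := by
    intro i
    unfold curlC
    exact pd_sub (pd_diff hb 0) (pd_diff ha 1) i
  rw [pd_pd_mul hb hb 0 0, pd_pd_mul ha hb 0 1, pd_pd_mul ha ha 1 1, hcurl 0, hcurl 1,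
    pd_comm ha, pd_comm hb]
  simp only [sym2, jacC, Matrix.det_fin_two, Matrix.smul_apply, Matrix.add_apply,
    Matrix.transpose_apply, Matrix.of_apply, Matrix.cons_val', Matrix.cons_val_zero,
    Matrix.cons_val_one, Matrix.head_cons, Matrix.empty_val', Matrix.cons_val_fin_one,
    Matrix.head_fin_const, smul_eq_mul]
  ring

end
end

section
/- Let ω ⊂ ℝ² be bounded with Lipschitz boundary. There is a constant C = C(ω) such that for every G ∈ L²(ω, ℝ^{2×2}), ‖det G‖_{H^{-2}(ω)} ≤ C ‖G‖²_{L²(ω)}, and for every B ∈ L^∞(ω, ℝ^{2×2}) and G ∈ L²(ω, ℝ^{2×2}), ‖⟨cof B : G⟩‖_{H^{-2}(ω)} ≤ C ‖B‖_{L^∞(ω)} ‖G‖_{L²(ω)}. -/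
open MeasureTheory Filter Matrix

attribute [local instance] Matrix.frobeniusNormedAddCommGroup Matrix.frobeniusNormedSpace

noncomputable section

lemma frob_norm_sq (M : M2) : ‖M‖^2 = ∑ i, ∑ j, (M i j)^2 := by
  rw [Matrix.frobenius_norm_def]
  rw [← Real.rpow_natCast _ 2, ← Real.rpow_mul (by positivity)]
  norm_num

lemma continuous_entry (i j : Fin 2) : Continuous fun M : M2 => M i j :=
  (continuous_apply j).comp (continuous_apply i)

lemma continuous_det2 : Continuous fun M : M2 => M.det := by
  simp only [Matrix.det_fin_two]
  exact ((continuous_entry 0 0).mul (continuous_entry 1 1)).sub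
    ((continuous_entry 0 1).mul (continuous_entry 1 0))

lemma abs_det_le (M : M2) : |M.det| ≤ 2⁻¹ * ‖M‖^2 := by
  rw [frob_norm_sq, Matrix.det_fin_two, Fin.sum_univ_two, Fin.sum_univ_two, Fin.sum_univ_two]
  rw [abs_le]
  constructor <;> nlinarith [sq_nonneg (M 0 0 + M 1 1), sq_nonneg (M 0 0 - M 1 1),
    sq_nonneg (M 0 1 + M 1 0), sq_nonneg (M 0 1 - M 1 0)]

lemma abs_frob_cof_le (M N : M2) : |frob (cof2 M) N| ≤ ‖M‖ * ‖N‖ := by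
  have h1 : |frob (cof2 M) N|^2 ≤ (‖M‖ * ‖N‖)^2 := by
    rw [mul_pow, frob_norm_sq, frob_norm_sq, sq_abs]
    simp [frob, cof2, Fin.sum_univ_two]
    nlinarith [sq_nonneg (M 1 1 * N 0 1 + M 0 1 * N 0 0), sq_nonneg (M 1 1 * N 1 0 + M 1 0 * N 0 0),
      sq_nonneg (M 1 1 * N 1 1 - M 0 0 * N 0 0), sq_nonneg (M 0 1 * N 1 0 - M 1 0 * N 0 1),
      sq_nonneg (M 0 1 * N 1 1 + M 0 0 * N 0 1), sq_nonneg (M 1 0 * N 1 1 + M 0 0 * N 1 0)]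
  have h2 : (0:ℝ) ≤ ‖M‖ * ‖N‖ := by positivity
  nlinarith [abs_nonneg (frob (cof2 M) N)]

lemma pd_contDiff {f : R2 → ℝ} (hf : ContDiff ℝ (⊤ : ℕ∞) f) (i : Fin 2) : ContDiff ℝ (⊤ : ℕ∞) (pd i f) :=
  (hf.fderiv_right (by simp)).clm_apply contDiff_const

lemma pd_compactSupport {f : R2 → ℝ} (hf : HasCompactSupport f) (i : Fin 2) :
    HasCompactSupport (pd i f) :=
  hf.fderiv_apply ℝ _

lemma pd_support {f : R2 → ℝ} (i : Fin 2) : Function.support (pd i f) ⊆ tsupport f := by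
  intro x hx
  apply support_fderiv_subset ℝ
  intro h
  simp only [pd, Function.mem_support] at hx
  exact hx (by rw [h]; rfl)

lemma oneD_bound {g : ℝ → ℝ} (hg : ContDiff ℝ (⊤ : ℕ∞) g) (hc : HasCompactSupport g) (b : ℝ) :
    |g b| ≤ ∫ t, |deriv g t| := by
  have hint : Integrable (fun t => |deriv g t|) :=
    ((hg.continuous_deriv (by simp)).integrable_of_hasCompactSupport hc.deriv).abs
  calc |g b| = |∫ t in Set.Iic b, deriv g t| := by
        rw [hc.integral_Iic_deriv_eq (hg.of_le (by simp)) b]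
    _ ≤ ∫ t in Set.Iic b, |deriv g t| := by
        simpa [Real.norm_eq_abs] using
          norm_integral_le_integral_norm (f := deriv g) (μ := volume.restrict (Set.Iic b))
    _ ≤ ∫ t, |deriv g t| := setIntegral_le_integral hint (ae_of_all _ fun t => abs_nonneg _)

lemma slice2_hasDerivAt {f : R2 → ℝ} (hf : ContDiff ℝ (⊤ : ℕ∞) f) (x y : ℝ) :
    HasDerivAt (fun t => f (x, t)) (pd 1 f (x, y)) y := by
  have h1 : HasFDerivAt f (fderiv ℝ f (x, y)) (x, y) :=
    (hf.differentiable (by simp) (x, y)).hasFDerivAt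
  have h2 : HasDerivAt (fun t : ℝ => (x, t)) ((0 : ℝ), (1 : ℝ)) y :=
    (hasDerivAt_const y x).prodMk (hasDerivAt_id y)
  exact h1.comp_hasDerivAt y h2

lemma slice1_hasDerivAt {f : R2 → ℝ} (hf : ContDiff ℝ (⊤ : ℕ∞) f) (x y : ℝ) :
    HasDerivAt (fun s => f (s, y)) (pd 0 f (x, y)) x := by
  have h1 : HasFDerivAt f (fderiv ℝ f (x, y)) (x, y) :=
    (hf.differentiable (by simp) (x, y)).hasFDerivAt
  have h2 : HasDerivAt (fun s : ℝ => (s, y)) ((1 : ℝ), (0 : ℝ)) x :=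
    (hasDerivAt_id x).prodMk (hasDerivAt_const x y)
  exact h1.comp_hasDerivAt x h2

lemma slice2_compactSupport {f : R2 → ℝ} (hc : HasCompactSupport f) (x : ℝ) :
    HasCompactSupport (fun t => f (x, t)) := by
  have : Isometry (fun t : ℝ => (x, t)) :=
    Isometry.of_dist_eq fun a b => by simp [Prod.dist_eq, dist_nonneg]
  exact hc.comp_isClosedEmbedding this.isClosedEmbedding

lemma slice1_compactSupport {f : R2 → ℝ} (hc : HasCompactSupport f) (y : ℝ) :
    HasCompactSupport (fun s => f (s, y)) := by
  have : Isometry (fun s : ℝ => (s, y)) :=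
    Isometry.of_dist_eq fun a b => by simp [Prod.dist_eq, dist_nonneg]
  exact hc.comp_isClosedEmbedding this.isClosedEmbedding

lemma sup_bound {f : R2 → ℝ} (hf : ContDiff ℝ (⊤ : ℕ∞) f) (hc : HasCompactSupport f) (p : R2) :
    |f p| ≤ ∫ z, |pd 0 (pd 1 f) z| := by
  set β := pd 1 f with hβdef
  have hβ : ContDiff ℝ (⊤ : ℕ∞) β := pd_contDiff hf 1
  have hβc : HasCompactSupport β := pd_compactSupport hc 1
  set h := pd 0 β with hhdef
  have hh : ContDiff ℝ (⊤ : ℕ∞) h := pd_contDiff hβ 0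
  have hhc : HasCompactSupport h := pd_compactSupport hβc 0
  have hhcont : Continuous h := hh.continuous
  have hhint : Integrable (fun z => |h z|) := (hhcont.integrable_of_hasCompactSupport hhc).abs
  -- step A
  have gA : ContDiff ℝ (⊤ : ℕ∞) (fun t => f (p.1, t)) := hf.comp (contDiff_const.prodMk contDiff_id)
  have gAc : HasCompactSupport (fun t => f (p.1, t)) := slice2_compactSupport hc p.1
  have derA : deriv (fun t => f (p.1, t)) = fun t => β (p.1, t) :=
    funext fun t => (slice2_hasDerivAt hf p.1 t).deriv
  have stepA : |f p| ≤ ∫ t, |β (p.1, t)| := by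
    have := oneD_bound gA gAc p.2
    rw [derA] at this
    simpa using this
  -- step B
  have stepB : ∀ t, |β (p.1, t)| ≤ ∫ s, |h (s, t)| := by
    intro t
    have gB : ContDiff ℝ (⊤ : ℕ∞) (fun s => β (s, t)) := hβ.comp (contDiff_id.prodMk contDiff_const)
    have gBc : HasCompactSupport (fun s => β (s, t)) := slice1_compactSupport hβc t
    have derB : deriv (fun s => β (s, t)) = fun s => h (s, t) :=
      funext fun s => (slice1_hasDerivAt hβ s t).deriv
    have := oneD_bound gB gBc p.1
    rw [derB] at this
    exact this
  -- integrability on the product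
  have hprod : Integrable (fun z : ℝ × ℝ => |h z|) (volume.prod volume) := by
    rw [← Measure.volume_eq_prod]; exact hhint
  have int1 : Integrable (fun t => |β (p.1, t)|) :=
    ((hβ.continuous.comp (continuous_const.prodMk continuous_id)).integrable_of_hasCompactSupport
      (slice2_compactSupport hβc p.1)).abs
  have int2 : Integrable (fun t => ∫ s, |h (s, t)|) := hprod.integral_prod_right
  have stepC : ∫ t, |β (p.1, t)| ≤ ∫ t, ∫ s, |h (s, t)| :=
    integral_mono int1 int2 fun t => stepB t
  have stepD : (∫ t, ∫ s, |h (s, t)|) = ∫ z, |h z| := by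
    have hu : Integrable (Function.uncurry fun s t => |h (s, t)|) (volume.prod volume) := by
      have : (Function.uncurry fun s t => |h (s, t)|) = fun z : ℝ × ℝ => |h z| := by
        ext z; simp [Function.uncurry]
      rw [this]; exact hprod
    rw [← integral_integral_swap hu, integral_integral hu]
    rw [Measure.volume_eq_prod]
  calc |f p| ≤ ∫ t, |β (p.1, t)| := stepA
    _ ≤ ∫ t, ∫ s, |h (s, t)| := stepC
    _ = ∫ z, |h z| := stepD


lemma l2norm_eq_sqrt {E : Type*} [NormedAddCommGroup E] (ω : Set R2) {G : R2 → E}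
    (hG : MemLp G 2 (μr ω)) :
    l2norm ω G = Real.sqrt (∫ x, ‖G x‖^2 ∂(μr ω)) := by
  have h := hG.eLpNorm_eq_integral_rpow_norm two_ne_zero ENNReal.ofNat_ne_top
  have h2 : ENNReal.toReal 2 = 2 := by norm_num
  rw [h2] at h
  simp_rw [Real.rpow_two] at h
  have hnn : (0:ℝ) ≤ ∫ a, ‖G a‖ ^ 2 ∂(μr ω) := integral_nonneg fun a => sq_nonneg _
  rw [l2norm, h, ENNReal.toReal_ofReal (Real.rpow_nonneg hnn _), Real.sqrt_eq_rpow, one_div]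

lemma cauchy_schwarz_int (ω : Set R2) (hvol : volume ω ≠ ⊤) {f : R2 → ℝ}
    (hnn : ∀ x, 0 ≤ f x) (hf : MemLp f 2 (μr ω)) :
    ∫ x, f x ∂(μr ω) ≤ Real.sqrt (∫ x, (f x)^2 ∂(μr ω)) * Real.sqrt ((volume ω).toReal) := by
  haveI : IsFiniteMeasure (μr ω) := by
    constructor
    rw [μr, Measure.restrict_apply_univ]
    exact hvol.lt_top
  have conj : Real.HolderConjugate 2 2 := Real.HolderConjugate.two_two
  have h2 : ENNReal.ofReal (2:ℝ) = 2 := by norm_num [ENNReal.ofReal_ofNat]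
  have key := integral_mul_le_Lp_mul_Lq_of_nonneg (μ := μr ω) conj
    (f := f) (g := fun _ => (1:ℝ)) (ae_of_all _ hnn) (ae_of_all _ fun _ => zero_le_one)
    (h2 ▸ hf) (h2 ▸ memLp_const 1)
  simp_rw [Real.rpow_two, mul_one, one_pow] at key
  have e1 : ∫ (_ : R2), (1:ℝ) ∂(μr ω) = (volume ω).toReal := by
    rw [integral_const, μr, measureReal_restrict_apply_univ, measureReal_def, smul_eq_mul, mul_one]
  rw [e1] at key
  simpa [Real.sqrt_eq_rpow] using key

lemma tsupport_pd_subset {f : R2 → ℝ} (i : Fin 2) : tsupport (pd i f) ⊆ tsupport f :=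
  closure_minimal (pd_support i) (isClosed_tsupport _)

set_option maxHeartbeats 1000000 in
lemma test_sup_bound (ω : Set R2) (hvol : volume ω ≠ ⊤) {α : R2 → ℝ}
    (hα : IsTest ω α) (hhess : hessNormSq ω α ≤ 1) (p : R2) :
    |α p| ≤ Real.sqrt ((volume ω).toReal) := by
  obtain ⟨hsm, hcs, hts⟩ := hα
  set h := pd 0 (pd 1 α) with hhdef
  have hhsm : ContDiff ℝ (⊤ : ℕ∞) h := pd_contDiff (pd_contDiff hsm 1) 0
  have hhc : HasCompactSupport h := pd_compactSupport (pd_compactSupport hcs 1) 0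
  have hcont : Continuous h := hhsm.continuous
  have hsupp : ∀ x, x ∉ ω → |h x| = 0 := by
    intro x hx
    have : x ∉ Function.support h := by
      intro hmem
      exact hx (hts (tsupport_pd_subset 1 (pd_support 0 hmem)))
    simp [Function.notMem_support.mp this]
  have step1 : |α p| ≤ ∫ z, |h z| := sup_bound hsm hcs p
  have step2 : (∫ z, |h z|) = ∫ z, |h z| ∂(μr ω) := by
    rw [μr, ← setIntegral_eq_integral_of_forall_compl_eq_zero hsupp]
  -- L² membership of |h| on ω
  have hmem : MemLp (fun z => |h z|) 2 (μr ω) := by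
    have habs : HasCompactSupport (fun z => |h z|) :=
      hhc.comp_left (g := fun t : ℝ => |t|) abs_zero
    have h1 : MemLp (fun z => |h z|) 2 (volume : Measure R2) :=
      Continuous.memLp_of_hasCompactSupport hcont.abs habs
    exact h1.restrict ω
  have step3 := cauchy_schwarz_int ω hvol (fun x => abs_nonneg (h x)) hmem
  -- ∫ |h|² ≤ hessNormSq
  have e : ∀ (i j : Fin 2), Continuous (fun x => pd i (pd j α) x) ∧
      HasCompactSupport (fun x => pd i (pd j α) x) := fun i j =>
    ⟨(pd_contDiff (pd_contDiff hsm j) i).continuous,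
      pd_compactSupport (pd_compactSupport hcs j) i⟩
  have hFint : Integrable (fun x => frob (hessC α x) (hessC α x)) (μr ω) := by
    have : Integrable (fun x => frob (hessC α x) (hessC α x)) := by
      have : (fun x => frob (hessC α x) (hessC α x)) = fun x =>
          (pd 0 (pd 0 α) x)^2 + (pd 0 (pd 1 α) x)^2 + ((pd 1 (pd 0 α) x)^2
           + (pd 1 (pd 1 α) x)^2) := by
        funext x; simp [frob, hessC, Fin.sum_univ_two]; ring
      rw [this]
      have sq : ∀ (i j : Fin 2), Integrable (fun x => (pd i (pd j α) x)^2) := by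
        intro i j
        have hcs2 : HasCompactSupport (fun x => pd i (pd j α) x * pd i (pd j α) x) :=
          (e i j).2.mul_right
        have h3 : Integrable (fun x => pd i (pd j α) x * pd i (pd j α) x)
            (volume : Measure R2) :=
          ((e i j).1.mul (e i j).1).integrable_of_hasCompactSupport hcs2
        simpa [sq] using h3
      exact ((sq 0 0).add (sq 0 1)).add ((sq 1 0).add (sq 1 1))
    exact this.restrict
  have step4 : (∫ x, |h x|^2 ∂(μr ω)) ≤ hessNormSq ω α := by
    rw [hessNormSq, μr]
    refine integral_mono_of_nonneg (ae_of_all _ fun x => sq_nonneg _) hFint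
      (ae_of_all _ fun x => ?_)
    simp only [frob, hessC, Fin.sum_univ_two]
    simp [sq_abs]
    nlinarith [sq_nonneg (pd 0 (pd 0 α) x), sq_nonneg (pd 1 (pd 0 α) x),
      sq_nonneg (pd 1 (pd 1 α) x), sq_nonneg (pd 0 (pd 1 α) x)]
  have step5 : Real.sqrt (∫ x, |h x|^2 ∂(μr ω)) ≤ 1 := by
    rw [show (1:ℝ) = Real.sqrt 1 by simp]
    exact Real.sqrt_le_sqrt (step4.trans hhess)
  calc |α p| ≤ ∫ z, |h z| := step1
    _ = ∫ z, |h z| ∂(μr ω) := step2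
    _ ≤ Real.sqrt (∫ x, |h x|^2 ∂(μr ω)) * Real.sqrt ((volume ω).toReal) := step3
    _ ≤ 1 * Real.sqrt ((volume ω).toReal) := by
        apply mul_le_mul_of_nonneg_right step5 (Real.sqrt_nonneg _)
    _ = Real.sqrt ((volume ω).toReal) := one_mul _

lemma pairing_bound (ω : Set R2) (hvol : volume ω ≠ ⊤) {α f : R2 → ℝ}
    (hα : IsTest ω α) (hhess : hessNormSq ω α ≤ 1) (hf : Integrable f (μr ω)) :
    ∫ x in ω, f x * α x ≤ Real.sqrt ((volume ω).toReal) * ∫ x, |f x| ∂(μr ω) := by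
  set M := Real.sqrt ((volume ω).toReal) with hM
  have hMb : ∀ p, |α p| ≤ M := test_sup_bound ω hvol hα hhess
  have habs : ∀ x, |f x * α x| ≤ M * |f x| := by
    intro x
    rw [abs_mul]
    calc |f x| * |α x| ≤ |f x| * M :=
          mul_le_mul_of_nonneg_left (hMb x) (abs_nonneg _)
      _ = M * |f x| := mul_comm _ _
  have hint : Integrable (fun x => M * |f x|) (μr ω) := hf.abs.const_mul M
  calc ∫ x in ω, f x * α x = ∫ x, f x * α x ∂(μr ω) := rfl
    _ ≤ |∫ x, f x * α x ∂(μr ω)| := le_abs_self _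
    _ ≤ ∫ x, |f x * α x| ∂(μr ω) := by
        simpa only [Real.norm_eq_abs] using
          norm_integral_le_integral_norm (f := fun x => f x * α x) (μ := μr ω)
    _ ≤ ∫ x, M * |f x| ∂(μr ω) :=
        integral_mono_of_nonneg (ae_of_all _ fun x => abs_nonneg _) hint
          (ae_of_all _ habs)
    _ = M * ∫ x, |f x| ∂(μr ω) := integral_const_mul _ _

/-- The `H⁻²` bounds (4.4): `‖det G‖_{H⁻²} ≤ C‖G‖²_{L²}` and
`‖⟨cof B : G⟩‖_{H⁻²} ≤ C‖B‖_{L^∞}‖G‖_{L²}`. -/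
theorem stmt_8 (ω : Set R2) (hω : IsOpen ω) (hbd : Bornology.IsBounded ω)
    (hlip : HasLipschitzBoundary ω) :
    ∃ C > (0:ℝ),
      (∀ G : R2 → M2, MemL2 ω G →
        funcHneg2 ω (fun x => (G x).det) ≤ C * (l2norm ω G)^2) ∧
      (∀ (B G : R2 → M2), MemLp B ⊤ (μr ω) → MemL2 ω G →
        funcHneg2 ω (fun x => frob (cof2 (B x)) (G x))
          ≤ C * linftyNorm ω B * l2norm ω G) := by
  have hvol : volume ω ≠ ⊤ := hbd.measure_lt_top.ne
  haveI : IsFiniteMeasure (μr ω) := by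
    constructor
    rw [μr, Measure.restrict_apply_univ]
    exact hvol.lt_top
  set V : ℝ := (volume ω).toReal with hVdef
  have hVnn : 0 ≤ V := ENNReal.toReal_nonneg
  set sV : ℝ := Real.sqrt V with hsVdef
  have hsVnn : 0 ≤ sV := Real.sqrt_nonneg _
  refine ⟨V + sV + 1, by positivity, ?_, ?_⟩
  · -- det part
    intro G hG
    have hG2 : MemLp G 2 (μr ω) := hG
    have hGnsq : Integrable (fun x => ‖G x‖^2) (μr ω) := by
      have := hG2.integrable_norm_rpow two_ne_zero ENNReal.ofNat_ne_top
      have h2 : ENNReal.toReal 2 = (2:ℝ) := by norm_num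
      rw [h2] at this
      simpa [Real.rpow_two] using this
    have hdm : AEStronglyMeasurable (fun x => (G x).det) (μr ω) :=
      continuous_det2.comp_aestronglyMeasurable hG2.1
    have hdet_int : Integrable (fun x => (G x).det) (μr ω) := by
      refine Integrable.mono' (hGnsq.const_mul 2⁻¹) hdm (ae_of_all _ fun x => ?_)
      simpa [Real.norm_eq_abs] using abs_det_le (G x)
    have l2sq : (l2norm ω G)^2 = ∫ x, ‖G x‖^2 ∂(μr ω) := by
      rw [l2norm_eq_sqrt ω hG2]
      exact Real.sq_sqrt (integral_nonneg fun x => sq_nonneg _)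
    have habs : (∫ x, |(G x).det| ∂(μr ω)) ≤ 2⁻¹ * (l2norm ω G)^2 := by
      rw [l2sq, ← integral_const_mul]
      refine integral_mono_of_nonneg (ae_of_all _ fun x => abs_nonneg _)
        (hGnsq.const_mul 2⁻¹) (ae_of_all _ fun x => abs_det_le (G x))
    refine Real.sSup_le ?_ (by positivity)
    rintro r ⟨α, hαt, hhess, rfl⟩
    calc ∫ x in ω, (G x).det * α x ≤ sV * ∫ x, |(G x).det| ∂(μr ω) :=
          pairing_bound ω hvol hαt hhess hdet_int
      _ ≤ sV * (2⁻¹ * (l2norm ω G)^2) := mul_le_mul_of_nonneg_left habs hsVnn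
      _ ≤ (V + sV + 1) * (l2norm ω G)^2 := by nlinarith [sq_nonneg (l2norm ω G)]
  · -- cofactor part
    intro B G hB hG
    have hG2 : MemLp G 2 (μr ω) := hG
    set L : ℝ := linftyNorm ω B with hLdef
    have hLnn : 0 ≤ L := ENNReal.toReal_nonneg
    have hBbd : ∀ᵐ x ∂(μr ω), ‖B x‖ ≤ L := by
      have h1 := ae_le_eLpNormEssSup (f := B) (μ := μr ω)
      have hfin : eLpNormEssSup B (μr ω) ≠ ⊤ := by
        have := hB.2
        rw [eLpNorm_exponent_top] at this
        exact this.ne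
      filter_upwards [h1] with x hx
      have := ENNReal.toReal_mono hfin hx
      rw [hLdef, linftyNorm, eLpNorm_exponent_top]
      simpa using this
    set g : R2 → ℝ := fun x => frob (cof2 (B x)) (G x) with hgdef
    have hgm : AEStronglyMeasurable g (μr ω) := by
      have hBij : ∀ i j : Fin 2, AEStronglyMeasurable (fun x => B x i j) (μr ω) :=
        fun i j => (continuous_entry i j).comp_aestronglyMeasurable hB.1
      have hGij : ∀ i j : Fin 2, AEStronglyMeasurable (fun x => G x i j) (μr ω) :=
        fun i j => (continuous_entry i j).comp_aestronglyMeasurable hG2.1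
      have : g = fun x => B x 1 1 * G x 0 0 + (-(B x 0 1)) * G x 0 1 +
          ((-(B x 1 0)) * G x 1 0 + B x 0 0 * G x 1 1) := by
        funext x
        simp [hgdef, frob, cof2, Fin.sum_univ_two]
      rw [this]
      exact ((((hBij 1 1).mul (hGij 0 0)).add (((hBij 0 1).neg).mul (hGij 0 1))).add
        ((((hBij 1 0).neg).mul (hGij 1 0)).add ((hBij 0 0).mul (hGij 1 1))))
    have hGnorm_int : Integrable (fun x => ‖G x‖) (μr ω) := hG2.norm.integrable one_le_two
    have hgbd : ∀ᵐ x ∂(μr ω), |g x| ≤ L * ‖G x‖ := by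
      filter_upwards [hBbd] with x hx
      calc |g x| ≤ ‖B x‖ * ‖G x‖ := abs_frob_cof_le (B x) (G x)
        _ ≤ L * ‖G x‖ := mul_le_mul_of_nonneg_right hx (norm_nonneg _)
    have hg_int : Integrable g (μr ω) := by
      refine Integrable.mono' (hGnorm_int.const_mul L) hgm ?_
      simpa [Real.norm_eq_abs] using hgbd
    have hCS := cauchy_schwarz_int ω hvol (f := fun x => ‖G x‖)
      (fun x => norm_nonneg _) hG2.norm
    have hl2 : Real.sqrt (∫ x, ‖G x‖^2 ∂(μr ω)) = l2norm ω G :=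
      (l2norm_eq_sqrt ω hG2).symm
    have habs : (∫ x, |g x| ∂(μr ω)) ≤ L * (l2norm ω G * sV) := by
      calc (∫ x, |g x| ∂(μr ω)) ≤ ∫ x, L * ‖G x‖ ∂(μr ω) :=
            integral_mono_of_nonneg (ae_of_all _ fun x => abs_nonneg _)
              (hGnorm_int.const_mul L) hgbd
        _ = L * ∫ x, ‖G x‖ ∂(μr ω) := integral_const_mul _ _
        _ ≤ L * (l2norm ω G * sV) := by
            refine mul_le_mul_of_nonneg_left ?_ hLnn
            rw [← hl2]
            exact hCS
    have hrhs : 0 ≤ (V + sV + 1) * L * l2norm ω G :=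
      mul_nonneg (mul_nonneg (by positivity) hLnn) ENNReal.toReal_nonneg
    refine Real.sSup_le ?_ hrhs
    rintro r ⟨α, hαt, hhess, rfl⟩
    calc ∫ x in ω, g x * α x ≤ sV * ∫ x, |g x| ∂(μr ω) :=
          pairing_bound ω hvol hαt hhess hg_int
      _ ≤ sV * (L * (l2norm ω G * sV)) := mul_le_mul_of_nonneg_left habs hsVnn
      _ ≤ (V + sV + 1) * L * l2norm ω G := by
          have hl2nn : 0 ≤ l2norm ω G := ENNReal.toReal_nonneg
          have hsq : sV * sV = V := Real.mul_self_sqrt hVnn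
          nlinarith [mul_nonneg hLnn hl2nn]

end
end

section
/- Let φ ∈ C_c^∞(ℝ²) be a standard mollifier and φ_ε(x) = ε^{-2}φ(x/ε). If v ∈ C^{1,a}(ω̄, ℝ) for some a ∈ (0,1), then for v_ε = v * φ_ε one has the commutator estimate ‖(∇v_ε) ⊗ (∇v_ε) − ((∇v) ⊗ (∇v)) * φ_ε‖_{C⁰} ≤ C ε^{2a}, with C depending on ‖v‖_{C^{1,a}} and φ. -/
open MeasureTheory Filter Matrix

attribute [local instance] Matrix.frobeniusNormedAddCommGroup Matrix.frobeniusNormedSpace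

noncomputable section

def outer (p : R2) : M2 := !![p.1 * p.1, p.1 * p.2; p.2 * p.1, p.2 * p.2]

/-- mollification `f * φ_ε` with `φ_ε(x) = ε⁻²φ(x/ε)`. -/
def mollify {E : Type*} [NormedAddCommGroup E] [NormedSpace ℝ E]
    (φ : R2 → ℝ) (ε : ℝ) (f : R2 → E) (x : R2) : E :=
  ∫ y, ((ε^2)⁻¹ * φ (ε⁻¹ • (x - y))) • f y

namespace Stmt15Aux

open MeasureTheory Metric

lemma finrank_R2 : Module.finrank ℝ R2 = 2 := by
  simp [Module.finrank_prod]

lemma mollify_eq {E : Type*} [NormedAddCommGroup E] [NormedSpace ℝ E]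
    (φ : R2 → ℝ) {ε : ℝ} (hε : 0 < ε) (f : R2 → E) (x : R2) :
    mollify φ ε f x = ∫ t, φ t • f (x - ε • t) := by
  have hε2 : (0:ℝ) < ε ^ 2 := by positivity
  have h0 : mollify φ ε f x = ∫ t, ((ε^2)⁻¹ * φ (ε⁻¹ • t)) • f (x - t) := by
    rw [mollify, ← MeasureTheory.integral_sub_left_eq_self
      (fun t : R2 => ((ε^2)⁻¹ * φ (ε⁻¹ • t)) • f (x - t)) volume x]
    simp only [sub_sub_cancel]
  have h1 := MeasureTheory.Measure.integral_comp_smul volume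
      (fun t : R2 => ((ε^2)⁻¹ * φ (ε⁻¹ • t)) • f (x - t)) ε
  rw [finrank_R2, abs_of_pos (by positivity : (0:ℝ) < ((ε^2)⁻¹))] at h1
  have hss : ∀ s : R2, ε⁻¹ • ε • s = s := fun s => by
    rw [smul_smul, inv_mul_cancel₀ hε.ne', one_smul]
  simp only [hss] at h1
  have h2 : ∫ t, ((ε^2)⁻¹ * φ (ε⁻¹ • t)) • f (x - t)
      = (ε^2) • ∫ s, ((ε^2)⁻¹ * φ s) • f (x - ε • s) := by
    rw [h1, smul_smul, mul_inv_cancel₀ hε2.ne', one_smul]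
  rw [h0, h2, ← integral_smul]
  congr 1; funext s
  rw [smul_smul]
  congr 1
  field_simp

set_option synthInstance.maxHeartbeats 1000000 in
set_option maxHeartbeats 1000000 in
lemma grad_mollify (φ : R2 → ℝ) (hφc : HasCompactSupport φ) (hφcont : Continuous φ)
    {R ε : ℝ} (hR : tsupport φ ⊆ closedBall 0 R) (hRnn : 0 ≤ R)
    (hε : 0 < ε) (hε1 : ε ≤ 1)
    (v : R2 → ℝ) (hv : ContDiff ℝ 1 v) (x : R2) (i : Fin 2) :
    pd i (mollify φ ε v) x = ∫ t, φ t * pd i v (x - ε • t) := by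
  have hdv : Differentiable ℝ v := hv.differentiable one_ne_zero
  have hcf : Continuous (fderiv ℝ v) := hv.continuous_fderiv one_ne_zero
  -- bound for the derivative on a compact set
  obtain ⟨K, hK⟩ := (isCompact_closedBall x (1 + R)).exists_bound_of_continuousOn
    hcf.continuousOn
  set K' : ℝ := max K 0 with hK'def
  have hK' : ∀ y ∈ closedBall x (1 + R), ‖fderiv ℝ v y‖ ≤ K' :=
    fun y hy => (hK y hy).trans (le_max_left _ _)
  have hK'0 : 0 ≤ K' := le_max_right _ _
  -- continuity of the translated maps
  have hts : ∀ z : R2, Continuous fun t : R2 => z - ε • t :=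
    fun z => continuous_const.sub (continuous_id.const_smul ε)
  have hcont1 : ∀ z : R2, Continuous fun t : R2 => φ t • v (z - ε • t) :=
    fun z => hφcont.smul (hv.continuous.comp (hts z))
  have hcont2 : ∀ z : R2, Continuous fun t : R2 => φ t • fderiv ℝ v (z - ε • t) :=
    fun z => hφcont.smul (hcf.comp (hts z))
  have hsupp2 : HasCompactSupport fun t : R2 => φ t • fderiv ℝ v (x - ε • t) :=
    hφc.smul_right
  have hint2 : Integrable (fun t : R2 => φ t • fderiv ℝ v (x - ε • t)) :=
    (hcont2 x).integrable_of_hasCompactSupport hsupp2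
  have key : HasFDerivAt (fun z : R2 => ∫ t, φ t • v (z - ε • t))
      (∫ t, φ t • fderiv ℝ v (x - ε • t)) x := by
    apply hasFDerivAt_integral_of_dominated_of_fderiv_le
      (F' := fun z t => φ t • fderiv ℝ v (z - ε • t))
      (bound := fun t => |φ t| * K') (s := Metric.ball x 1) (Metric.ball_mem_nhds x one_pos)
    · exact Filter.Eventually.of_forall fun z => (hcont1 z).aestronglyMeasurable
    · exact (hcont1 x).integrable_of_hasCompactSupport hφc.smul_right
    · exact (hcont2 x).aestronglyMeasurable
    · refine Filter.Eventually.of_forall fun t => fun z hz => ?_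
      refine (norm_smul_le (φ t) (fderiv ℝ v (z - ε • t))).trans ?_
      rw [Real.norm_eq_abs]
      by_cases hφt : φ t = 0
      · simp [hφt]
      · have htmem : t ∈ tsupport φ := subset_tsupport φ hφt
        have htR : ‖t‖ ≤ R := mem_closedBall_zero_iff.1 (hR htmem)
        have hmem : z - ε • t ∈ closedBall x (1 + R) := by
          rw [mem_closedBall, dist_eq_norm]
          have : z - ε • t - x = (z - x) - ε • t := by ring_nf
          rw [this]
          calc ‖(z - x) - ε • t‖ ≤ ‖z - x‖ + ‖ε • t‖ := norm_sub_le _ _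
            _ ≤ 1 + R := by
              have h1 : ‖z - x‖ ≤ 1 := le_of_lt (by simpa [dist_eq_norm] using hz)
              have h2 : ‖ε • t‖ ≤ R := by
                rw [norm_smul, Real.norm_eq_abs, abs_of_pos hε]
                calc ε * ‖t‖ ≤ 1 * R := mul_le_mul hε1 htR (norm_nonneg _) zero_le_one
                  _ = R := one_mul R
              linarith
        exact mul_le_mul_of_nonneg_left (hK' _ hmem) (abs_nonneg _)
    · exact (hφcont.abs.mul continuous_const).integrable_of_hasCompactSupport
        hφc.abs.mul_right
    · refine Filter.Eventually.of_forall fun t => fun z hz => ?_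
      have hinner : HasFDerivAt (fun z : R2 => v (z - ε • t))
          (fderiv ℝ v (z - ε • t)) z := by
        have h1 := (hdv (z - ε • t)).hasFDerivAt
        have h2 : HasFDerivAt (fun w : R2 => w - ε • t)
            (ContinuousLinearMap.id ℝ R2) z := (hasFDerivAt_id z).sub_const _
        have h3 := h1.comp z h2
        rw [ContinuousLinearMap.comp_id] at h3
        exact h3
      exact hinner.const_smul (φ t)
  have hmol : mollify φ ε v = fun z => ∫ t, φ t • v (z - ε • t) := by
    funext z; exact Stmt15Aux.mollify_eq φ hε v z
  have hfd : fderiv ℝ (mollify φ ε v) x = ∫ t, φ t • fderiv ℝ v (x - ε • t) := by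
    rw [hmol]; exact key.fderiv
  rw [pd, hfd, ContinuousLinearMap.integral_apply hint2]
  congr 1

lemma int_bound (φ : R2 → ℝ) (hφc : HasCompactSupport φ) (hφcont : Continuous φ)
    (hφ1 : ∫ x, φ x = 1) (hφpos : ∀ x, 0 ≤ φ x)
    (k : R2 → ℝ) (hk : Continuous k) (b : ℝ)
    (hkb : ∀ t ∈ tsupport φ, |k t| ≤ b) :
    |∫ t, φ t * k t| ≤ b := by
  have Iφk : Integrable (fun t : R2 => φ t * k t) :=
    (hφcont.mul hk).integrable_of_hasCompactSupport hφc.mul_right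
  have Iφ1 : Integrable φ := hφcont.integrable_of_hasCompactSupport hφc
  have h1 : |∫ t, φ t * k t| ≤ ∫ t, |φ t * k t| := by
    have := norm_integral_le_integral_norm (μ := volume) (fun t : R2 => φ t * k t)
    simpa only [Real.norm_eq_abs] using this
  refine h1.trans ?_
  have h2 : ∫ t, |φ t * k t| ≤ ∫ t, φ t * b := by
    apply integral_mono Iφk.abs (Iφ1.mul_const b)
    intro t
    show |φ t * k t| ≤ φ t * b
    by_cases ht : t ∈ tsupport φ
    · rw [abs_mul, abs_of_nonneg (hφpos t)]
      exact mul_le_mul_of_nonneg_left (hkb t ht) (hφpos t)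
    · simp [image_eq_zero_of_notMem_tsupport ht]
  refine h2.trans ?_
  rw [MeasureTheory.integral_mul_const, hφ1, one_mul]

lemma scalar_est (φ : R2 → ℝ) (hφc : HasCompactSupport φ) (hφcont : Continuous φ)
    (hφ1 : ∫ x, φ x = 1) (hφpos : ∀ x, 0 ≤ φ x)
    (f g : R2 → ℝ) (hf : Continuous f) (hg : Continuous g)
    (cf cg δ : ℝ) (hδ : 0 ≤ δ)
    (hfb : ∀ t ∈ tsupport φ, |f t - cf| ≤ δ)
    (hgb : ∀ t ∈ tsupport φ, |g t - cg| ≤ δ) :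
    |(∫ t, φ t * f t) * (∫ t, φ t * g t) - ∫ t, φ t * (f t * g t)| ≤ 2 * δ ^ 2 := by
  have Iφ : ∀ h : R2 → ℝ, Continuous h → Integrable (fun t : R2 => φ t * h t) :=
    fun h hh => (hφcont.mul hh).integrable_of_hasCompactSupport hφc.mul_right
  have Iφ1 : Integrable φ := hφcont.integrable_of_hasCompactSupport hφc
  set u : ℝ := ∫ t, φ t * (f t - cf) with hu_def
  set w : ℝ := ∫ t, φ t * (g t - cg) with hw_def
  set z : ℝ := ∫ t, φ t * ((f t - cf) * (g t - cg)) with hz_def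
  have hu : u = (∫ t, φ t * f t) - cf := by
    rw [hu_def]
    have : (∫ t, φ t * (f t - cf)) = ∫ t, (φ t * f t - φ t * cf) := by
      congr 1; funext t; ring
    rw [this, integral_sub (Iφ f hf) (Iφ1.mul_const cf),
      MeasureTheory.integral_mul_const, hφ1, one_mul]
  have hw : w = (∫ t, φ t * g t) - cg := by
    rw [hw_def]
    have : (∫ t, φ t * (g t - cg)) = ∫ t, (φ t * g t - φ t * cg) := by
      congr 1; funext t; ring
    rw [this, integral_sub (Iφ g hg) (Iφ1.mul_const cg),
      MeasureTheory.integral_mul_const, hφ1, one_mul]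
  have hz : z = (∫ t, φ t * (f t * g t)) - cg * (∫ t, φ t * f t)
      - cf * (∫ t, φ t * g t) + cf * cg := by
    rw [hz_def]
    have h1 : (∫ t, φ t * ((f t - cf) * (g t - cg)))
        = ∫ t, (φ t * (f t * g t) - cg * (φ t * f t) - cf * (φ t * g t)
            + (cf * cg) * φ t) := by
      congr 1; funext t; ring
    have I1 : Integrable (fun t : R2 => φ t * (f t * g t)) := Iφ _ (hf.mul hg)
    have I2 : Integrable (fun t : R2 => cg * (φ t * f t)) := (Iφ f hf).const_mul cg
    have I3 : Integrable (fun t : R2 => cf * (φ t * g t)) := (Iφ g hg).const_mul cf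
    have I4 : Integrable (fun t : R2 => (cf * cg) * φ t) := Iφ1.const_mul (cf*cg)
    have I12 : Integrable (fun t : R2 => φ t * (f t * g t) - cg * (φ t * f t)) :=
      I1.sub I2
    have I123 : Integrable (fun t : R2 =>
        φ t * (f t * g t) - cg * (φ t * f t) - cf * (φ t * g t)) := I12.sub I3
    rw [h1, integral_add I123 I4, integral_sub I12 I3, integral_sub I1 I2,
      MeasureTheory.integral_const_mul, MeasureTheory.integral_const_mul,
      MeasureTheory.integral_const_mul, hφ1, mul_one]
  have hkey : (∫ t, φ t * f t) * (∫ t, φ t * g t) - (∫ t, φ t * (f t * g t))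
      = u * w - z := by rw [hu, hw, hz]; ring
  rw [hkey]
  have hub : |u| ≤ δ :=
    int_bound φ hφc hφcont hφ1 hφpos _ (hf.sub continuous_const) δ hfb
  have hwb : |w| ≤ δ :=
    int_bound φ hφc hφcont hφ1 hφpos _ (hg.sub continuous_const) δ hgb
  have hzb : |z| ≤ δ ^ 2 := by
    apply int_bound φ hφc hφcont hφ1 hφpos _
      ((hf.sub continuous_const).mul (hg.sub continuous_const)) (δ^2)
    intro t ht
    show |(f t - cf) * (g t - cg)| ≤ δ ^ 2
    rw [abs_mul, sq]
    exact mul_le_mul (hfb t ht) (hgb t ht) (abs_nonneg _) hδ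
  calc |u * w - z| ≤ |u * w| + |z| := abs_sub _ _
    _ ≤ δ * δ + δ^2 := by
        rw [abs_mul]
        exact add_le_add (mul_le_mul hub hwb (abs_nonneg _) hδ) hzb
    _ = 2 * δ ^ 2 := by ring

end Stmt15Aux

set_option maxHeartbeats 1000000 in
theorem stmt_15 (φ : R2 → ℝ) (hφs : ContDiff ℝ (⊤ : ℕ∞) φ) (hφc : HasCompactSupport φ)
    (hφ1 : ∫ x, φ x = 1) (hφpos : ∀ x, 0 ≤ φ x)
    (v : R2 → ℝ) (a M : ℝ) (ha : a ∈ Set.Ioo (0:ℝ) 1) (hv : ContDiff ℝ 1 v)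
    (hHolder : ∀ x y : R2, ‖gradC v x - gradC v y‖ ≤ M * ‖x - y‖ ^ a) :
    ∃ C : ℝ, ∀ ε ∈ Set.Ioc (0:ℝ) 1, ∀ x : R2,
      ‖outer (gradC (mollify φ ε v) x)
          - mollify φ ε (fun y => outer (gradC v y)) x‖ ≤ C * ε ^ (2*a) := by
  obtain ⟨ha0, ha1⟩ := ha
  have hφcont : Continuous φ := hφs.continuous
  obtain ⟨R0, hR0⟩ := hφc.isBounded.subset_closedBall 0
  set R : ℝ := max R0 0 with hRdef
  have hR : tsupport φ ⊆ Metric.closedBall 0 R :=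
    hR0.trans (Metric.closedBall_subset_closedBall (le_max_left _ _))
  have hRnn : (0:ℝ) ≤ R := le_max_right _ _
  have hM : 0 ≤ M := by
    have h := hHolder ((1:ℝ),(0:ℝ)) 0
    have h3 : ‖(((1:ℝ),(0:ℝ)) : R2) - (0:R2)‖ = 1 := by
      simp [Prod.norm_def]
    rw [h3, Real.one_rpow, mul_one] at h
    exact le_trans (norm_nonneg _) h
  have hcf : Continuous (fderiv ℝ v) := hv.continuous_fderiv one_ne_zero
  refine ⟨8 * (M * R ^ a) ^ 2, ?_⟩
  rintro ε ⟨hε, hε1⟩ x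
  -- component functions
  have hfc : ∀ i : Fin 2, Continuous fun t : R2 => pd i v (x - ε • t) := by
    intro i
    have h1 : Continuous fun t : R2 => fderiv ℝ v (x - ε • t) :=
      hcf.comp (continuous_const.sub (continuous_id.const_smul ε))
    simp only [pd]
    exact h1.clm_apply continuous_const
  set δ : ℝ := M * R ^ a * ε ^ a with hδdef
  have hδ0 : 0 ≤ δ := by
    have : (0:ℝ) ≤ ε ^ a := Real.rpow_nonneg hε.le a
    have : (0:ℝ) ≤ R ^ a := Real.rpow_nonneg hRnn a
    positivity
  -- Hölder bound for components
  have hcomp : ∀ i : Fin 2, ∀ t ∈ tsupport φ,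
      |pd i v (x - ε • t) - pd i v x| ≤ δ := by
    intro i t ht
    have hnorm : ‖gradC v (x - ε • t) - gradC v x‖
        ≤ M * ‖(x - ε • t) - x‖ ^ a := hHolder _ _
    have hle : |pd i v (x - ε • t) - pd i v x|
        ≤ ‖gradC v (x - ε • t) - gradC v x‖ := by
      fin_cases i
      · have := norm_fst_le (gradC v (x - ε • t) - gradC v x)
        simpa [gradC, Real.norm_eq_abs] using this
      · have := norm_snd_le (gradC v (x - ε • t) - gradC v x)
        simpa [gradC, Real.norm_eq_abs] using this
    have h2 : ‖(x - ε • t) - x‖ = ε * ‖t‖ := by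
      have : (x - ε • t) - x = -(ε • t) := by abel
      rw [this, norm_neg, norm_smul, Real.norm_eq_abs, abs_of_pos hε]
    have h3 : ‖(x - ε • t) - x‖ ≤ ε * R := by
      rw [h2]
      exact mul_le_mul_of_nonneg_left (mem_closedBall_zero_iff.1 (hR ht)) hε.le
    have h4 : ‖(x - ε • t) - x‖ ^ a ≤ (ε * R) ^ a :=
      Real.rpow_le_rpow (norm_nonneg _) h3 ha0.le
    have h5 : (ε * R) ^ a = ε ^ a * R ^ a := Real.mul_rpow hε.le hRnn
    calc |pd i v (x - ε • t) - pd i v x|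
        ≤ M * ‖(x - ε • t) - x‖ ^ a := hle.trans hnorm
      _ ≤ M * (ε ^ a * R ^ a) := by
          rw [← h5]; exact mul_le_mul_of_nonneg_left h4 hM
      _ = δ := by rw [hδdef]; ring
  -- entry estimates
  have hent : ∀ i j : Fin 2,
      |(∫ t, φ t * pd i v (x - ε • t)) * (∫ t, φ t * pd j v (x - ε • t))
        - ∫ t, φ t * (pd i v (x - ε • t) * pd j v (x - ε • t))| ≤ 2 * δ ^ 2 :=
    fun i j => Stmt15Aux.scalar_est φ hφc hφcont hφ1 hφpos _ _ (hfc i) (hfc j)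
      (pd i v x) (pd j v x) δ hδ0 (hcomp i) (hcomp j)
  -- gradient of the mollification
  have hq : ∀ i : Fin 2, pd i (mollify φ ε v) x = ∫ t, φ t * pd i v (x - ε • t) :=
    fun i => Stmt15Aux.grad_mollify φ hφc hφcont hR hRnn hε hε1 v hv x i
  have hgrad : outer (gradC (mollify φ ε v) x)
      = !![(∫ t, φ t * pd 0 v (x - ε • t)) * (∫ t, φ t * pd 0 v (x - ε • t)),
           (∫ t, φ t * pd 0 v (x - ε • t)) * (∫ t, φ t * pd 1 v (x - ε • t));
           (∫ t, φ t * pd 1 v (x - ε • t)) * (∫ t, φ t * pd 0 v (x - ε • t)),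
           (∫ t, φ t * pd 1 v (x - ε • t)) * (∫ t, φ t * pd 1 v (x - ε • t))] := by
    rw [show gradC (mollify φ ε v) x
        = ((∫ t, φ t * pd 0 v (x - ε • t)), (∫ t, φ t * pd 1 v (x - ε • t))) from by
      rw [gradC, hq 0, hq 1]]
    rfl
  -- the mollified outer product
  have Iφ : ∀ h : R2 → ℝ, Continuous h → Integrable (fun t : R2 => φ t * h t) :=
    fun h hh => (hφcont.mul hh).integrable_of_hasCompactSupport hφc.mul_right
  have houter : mollify φ ε (fun y => outer (gradC v y)) x
      = !![∫ t, φ t * (pd 0 v (x - ε • t) * pd 0 v (x - ε • t)),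
           ∫ t, φ t * (pd 0 v (x - ε • t) * pd 1 v (x - ε • t));
           ∫ t, φ t * (pd 1 v (x - ε • t) * pd 0 v (x - ε • t)),
           ∫ t, φ t * (pd 1 v (x - ε • t) * pd 1 v (x - ε • t))] := by
    rw [Stmt15Aux.mollify_eq φ hε]
    have hdec : (fun t : R2 => φ t • outer (gradC v (x - ε • t)))
        = fun t : R2 =>
          (φ t * (pd 0 v (x - ε • t) * pd 0 v (x - ε • t))) • (!![1,0;0,0] : M2)
          + (φ t * (pd 0 v (x - ε • t) * pd 1 v (x - ε • t))) • (!![0,1;0,0] : M2)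
          + (φ t * (pd 1 v (x - ε • t) * pd 0 v (x - ε • t))) • (!![0,0;1,0] : M2)
          + (φ t * (pd 1 v (x - ε • t) * pd 1 v (x - ε • t))) • (!![0,0;0,1] : M2) := by
      funext t
      ext i j
      fin_cases i <;> fin_cases j <;>
        simp [outer, gradC, Matrix.smul_apply, Matrix.add_apply, smul_eq_mul] <;> ring
    rw [hdec]
    letI : TopologicalSpace M2 := PseudoMetricSpace.toUniformSpace.toTopologicalSpace
    have I1 : Integrable (fun t : R2 =>
        (φ t * (pd 0 v (x - ε • t) * pd 0 v (x - ε • t))) • (!![1,0;0,0] : M2)) :=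
      (Iφ _ ((hfc 0).mul (hfc 0))).smul_const _
    have I2 : Integrable (fun t : R2 =>
        (φ t * (pd 0 v (x - ε • t) * pd 1 v (x - ε • t))) • (!![0,1;0,0] : M2)) :=
      (Iφ _ ((hfc 0).mul (hfc 1))).smul_const _
    have I3 : Integrable (fun t : R2 =>
        (φ t * (pd 1 v (x - ε • t) * pd 0 v (x - ε • t))) • (!![0,0;1,0] : M2)) :=
      (Iφ _ ((hfc 1).mul (hfc 0))).smul_const _
    have I4 : Integrable (fun t : R2 =>
        (φ t * (pd 1 v (x - ε • t) * pd 1 v (x - ε • t))) • (!![0,0;0,1] : M2)) :=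
      (Iφ _ ((hfc 1).mul (hfc 1))).smul_const _
    have I12 : Integrable (fun t : R2 =>
        (φ t * (pd 0 v (x - ε • t) * pd 0 v (x - ε • t))) • (!![1,0;0,0] : M2)
        + (φ t * (pd 0 v (x - ε • t) * pd 1 v (x - ε • t))) • (!![0,1;0,0] : M2)) :=
      I1.add I2
    have I123 : Integrable (fun t : R2 =>
        (φ t * (pd 0 v (x - ε • t) * pd 0 v (x - ε • t))) • (!![1,0;0,0] : M2)
        + (φ t * (pd 0 v (x - ε • t) * pd 1 v (x - ε • t))) • (!![0,1;0,0] : M2)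
        + (φ t * (pd 1 v (x - ε • t) * pd 0 v (x - ε • t))) • (!![0,0;1,0] : M2)) :=
      I12.add I3
    rw [integral_add I123 I4, integral_add I12 I3, integral_add I1 I2,
      integral_smul_const, integral_smul_const, integral_smul_const,
      integral_smul_const]
    ext i j
    fin_cases i <;> fin_cases j <;>
      simp [Matrix.add_apply, Matrix.smul_apply, smul_eq_mul]
  -- entrywise bound on the difference
  have hDij : ∀ i j : Fin 2,
      ‖(outer (gradC (mollify φ ε v) x)
        - mollify φ ε (fun y => outer (gradC v y)) x) i j‖ ≤ 2 * δ ^ 2 := by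
    intro i j
    rw [Matrix.sub_apply, hgrad, houter]
    fin_cases i <;> fin_cases j <;>
      simpa [Real.norm_eq_abs] using hent _ _
  -- Frobenius norm bound
  have h2δ : (0:ℝ) ≤ 2 * δ ^ 2 := by positivity
  have hnorm : ‖outer (gradC (mollify φ ε v) x)
      - mollify φ ε (fun y => outer (gradC v y)) x‖ ≤ 2 * (2 * δ ^ 2) := by
    rw [Matrix.frobenius_norm_def]
    set D := outer (gradC (mollify φ ε v) x)
      - mollify φ ε (fun y => outer (gradC v y)) x with hDdef
    have hsum : ∑ i, ∑ j, ‖D i j‖ ^ (2:ℝ) ≤ 4 * (2 * δ ^ 2) ^ (2:ℝ) := by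
      have hij : ∀ i j : Fin 2, ‖D i j‖ ^ (2:ℝ) ≤ (2 * δ ^ 2) ^ (2:ℝ) := fun i j =>
        Real.rpow_le_rpow (norm_nonneg _) (hDij i j) (by norm_num)
      calc ∑ i, ∑ j, ‖D i j‖ ^ (2:ℝ)
          ≤ ∑ _i : Fin 2, ∑ _j : Fin 2, (2 * δ ^ 2) ^ (2:ℝ) :=
            Finset.sum_le_sum fun i _ => Finset.sum_le_sum fun j _ => hij i j
        _ = 4 * (2 * δ ^ 2) ^ (2:ℝ) := by
            simp [Finset.sum_const]; ring
    have h0 : (0:ℝ) ≤ ∑ i, ∑ j, ‖D i j‖ ^ (2:ℝ) :=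
      Finset.sum_nonneg fun i _ => Finset.sum_nonneg fun j _ =>
        Real.rpow_nonneg (norm_nonneg _) _
    have h1 := Real.rpow_le_rpow h0 hsum (by norm_num : (0:ℝ) ≤ 1/2)
    refine h1.trans (le_of_eq ?_)
    rw [Real.rpow_two, show (4:ℝ) * (2 * δ ^ 2) ^ 2 = (2 * (2 * δ ^ 2)) ^ 2 from by ring,
      ← Real.rpow_natCast (2 * (2 * δ ^ 2)) 2, ← Real.rpow_mul (by positivity)]
    norm_num
  refine hnorm.trans ?_
  have h2a : ε ^ (2*a) = ε ^ a * ε ^ a := by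
    rw [two_mul, Real.rpow_add hε]
  rw [h2a, hδdef]
  nlinarith [sq_nonneg (M * R ^ a * ε ^ a), sq_nonneg (M * R ^ a),
    Real.rpow_nonneg hε.le a, Real.rpow_nonneg hRnn a, sq_nonneg (M * R ^ a * ε ^ a - 1)]

end
end
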